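/- Let f : ℝ → ℝ be L-Lipschitz, f(0) < 0, r = dist(0, graph f), and let g(u) = −√(r² − u²) for u ∈ [−r, r]. Then f ≤ g on [−r, r], and a point (u, v) with u ∈ [−r, r] is a nearest point of graph f to the origin if and only if f(u) = g(u) = v. -/

import Mathlib

/-!
Every point `(u, f u)` of the graph lies outside the open disc of radius `r` about the origin.
Since `f 0 < 0` and `f` is continuous, the intermediate value theorem keeps `f` nonpositive over
`[-r, r]`: a zero of `f` strictly between `0` and `u` would be a graph point inside the disc. So
over `[-r, r]` the graph lies below the lower semicircle `g`, and it meets the circle of radius `r`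
exactly where it touches `g`.
-/

open Metric

def planeGraph (f : ℝ → ℝ) : Set (EuclideanSpace ℝ (Fin 2)) := {p | p 1 = f (p 0)}

lemma dist_zero_toLp_pair (a b : ℝ) :
    dist (0 : EuclideanSpace ℝ (Fin 2)) (WithLp.toLp 2 ![a, b]) = √(a ^ 2 + b ^ 2) := by
  rw [EuclideanSpace.dist_eq, Fin.sum_univ_two]
  norm_num [sq_abs]

lemma dist_zero_toLp_pair_eq_iff {a b r : ℝ} (hr : 0 ≤ r) :
    dist (0 : EuclideanSpace ℝ (Fin 2)) (WithLp.toLp 2 ![a, b]) = r ↔ a ^ 2 + b ^ 2 = r ^ 2 := by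
  rw [dist_zero_toLp_pair, Real.sqrt_eq_iff_eq_sq (by positivity) hr]

lemma sq_infDist_planeGraph_le (f : ℝ → ℝ) (u : ℝ) :
    infDist 0 (planeGraph f) ^ 2 ≤ u ^ 2 + f u ^ 2 := by
  have hmem : WithLp.toLp 2 ![u, f u] ∈ planeGraph f := rfl
  have h := infDist_le_dist_of_mem (x := 0) hmem
  rw [dist_zero_toLp_pair] at h
  exact (Real.le_sqrt infDist_nonneg (by positivity)).1 h

lemma nonpos_of_sq_le_sq_add_sq {f : ℝ → ℝ} {r u : ℝ} (hf : Continuous f) (hf0 : f 0 < 0)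
    (h : ∀ x, r ^ 2 ≤ x ^ 2 + f x ^ 2) (hu : u ∈ Set.Icc (-r) r) : f u ≤ 0 := by
  by_contra! hpos
  obtain ⟨x, hx, hfx⟩ : ∃ x ∈ Set.uIcc 0 u, f x = 0 :=
    intermediate_value_uIcc hf.continuousOn (Set.mem_uIcc.2 (.inl ⟨hf0.le, hpos.le⟩))
  have hxr := h x
  rw [hfx] at hxr
  -- `x` lies between `0` and `u`, so `x ^ 2 ≤ u ^ 2 ≤ r ^ 2 ≤ x ^ 2` forces `x = u`
  have hxu : x = u := by
    rcases Set.mem_uIcc.1 hx with ⟨h0x, hx_le⟩ | ⟨hux, hx0⟩ <;> nlinarith [hu.1, hu.2]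
  exact hpos.ne' (hxu ▸ hfx)

lemma le_neg_sqrt_of_nonpos {a r u : ℝ} (ha : a ≤ 0) (h : r ^ 2 ≤ u ^ 2 + a ^ 2) :
    a ≤ -√(r ^ 2 - u ^ 2) := by
  have : √(r ^ 2 - u ^ 2) ≤ -a := (Real.sqrt_le_left (by linarith)).2 (by nlinarith)
  linarith

lemma eq_neg_sqrt_iff {r u v : ℝ} (hu : u ^ 2 ≤ r ^ 2) :
    v = -√(r ^ 2 - u ^ 2) ↔ v ≤ 0 ∧ u ^ 2 + v ^ 2 = r ^ 2 := by
  constructor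
  · rintro rfl
    exact ⟨neg_nonpos.2 (Real.sqrt_nonneg _), by rw [neg_sq, Real.sq_sqrt (by linarith)]; ring⟩
  · rintro ⟨hv, h⟩
    rw [← h, add_sub_cancel_left, Real.sqrt_sq_eq_abs, abs_of_nonpos hv, neg_neg]

theorem nearest_point_characterisation (f : ℝ → ℝ) (L : NNReal)
    (hf : LipschitzWith L f) (hf0 : f 0 < 0)
    (r : ℝ)
    (hr : r = Metric.infDist (0 : EuclideanSpace ℝ (Fin 2))
      {p : EuclideanSpace ℝ (Fin 2) | p 1 = f (p 0)})
    (g : ℝ → ℝ) (hg : ∀ u, g u = -Real.sqrt (r ^ 2 - u ^ 2)) :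
    (∀ u ∈ Set.Icc (-r) r, f u ≤ g u) ∧
    ∀ u ∈ Set.Icc (-r) r, ∀ v : ℝ,
      ((WithLp.toLp 2 (![u, v] : Fin 2 → ℝ) : EuclideanSpace ℝ (Fin 2)) 1 =
          f ((WithLp.toLp 2 (![u, v] : Fin 2 → ℝ) : EuclideanSpace ℝ (Fin 2)) 0) ∧
        dist (0 : EuclideanSpace ℝ (Fin 2)) ((WithLp.toLp 2 (![u, v] : Fin 2 → ℝ) : EuclideanSpace ℝ (Fin 2))) = r)
      ↔ (f u = g u ∧ g u = v) := by
  have hr0 : 0 ≤ r := hr ▸ infDist_nonneg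
  have hgraph : ∀ u, r ^ 2 ≤ u ^ 2 + f u ^ 2 := hr ▸ sq_infDist_planeGraph_le f
  have hnonpos : ∀ u ∈ Set.Icc (-r) r, f u ≤ 0 := fun u hu =>
    nonpos_of_sq_le_sq_add_sq hf.continuous hf0 hgraph hu
  refine ⟨fun u hu => hg u ▸ le_neg_sqrt_of_nonpos (hnonpos u hu) (hgraph u), fun u hu v => ?_⟩
  have hu2 : u ^ 2 ≤ r ^ 2 := sq_le_sq' hu.1 hu.2
  simp only [Matrix.cons_val_one, Matrix.cons_val_zero, dist_zero_toLp_pair_eq_iff hr0, hg]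
  constructor
  · rintro ⟨rfl, hcircle⟩
    have hv := (eq_neg_sqrt_iff hu2).2 ⟨hnonpos u hu, hcircle⟩
    exact ⟨hv, hv.symm⟩
  · rintro ⟨hfu, rfl⟩
    exact ⟨hfu.symm, ((eq_neg_sqrt_iff hu2).1 rfl).2⟩
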